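/- arXiv:2012.05169 — 2 statements merged into one kernel-verified Lean document; each statement's English description precedes it below -/
import Mathlib

section
/- Let Y ∈ ℝ^{n×d}, x* ∈ ℝ^n, β > 0, and let D_1, …, D_ℓ be the ReLU sign-pattern matrices of Y. Let (w_i, z_i)_{i=1}^ℓ be any feasible point of the convex dual program, i.e., (2D_i − I)Y w_i ≥ 0 and (2D_i − I)Y z_i ≥ 0 componentwise for all i, with dual objective value F = (1/2)‖Σ_{i=1}^ℓ D_i Y (w_i − z_i) − x*‖_2² + β Σ_{i=1}^ℓ (‖w_i‖_2 + ‖z_i‖_2). Then there exist primal weights with m = 2ℓ neurons (taking, for each nonzero w_i, the neuron (w_i/√‖w_i‖_2, √‖w_i‖_2), and for each nonzero z_i the neuron (z_i/√‖z_i‖_2, −√‖z_i‖_2)) whose primal objective value equals F. Consequently p*_m ≤ d* for every m ≥ 2ℓ. -/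
open Matrix Finset

noncomputable section

/-- Euclidean (ℓ2) norm of a vector in ℝ^k. -/
def l2 {k : ℕ} (x : Fin k → ℝ) : ℝ := Real.sqrt (∑ i, (x i) ^ 2)

/-- Componentwise ReLU. -/
def relu {k : ℕ} (x : Fin k → ℝ) : Fin k → ℝ := fun i => max (x i) 0

/-- The set of ReLU sign-pattern matrices of `Y`: diagonal 0/1 matrices
`Diag(1_{Yu ≥ 0})` as `u` ranges over the closed unit ball. -/
def signPatterns {n d : ℕ} (Y : Matrix (Fin n) (Fin d) ℝ) :
    Set (Matrix (Fin n) (Fin n) ℝ) :=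
  { M | ∃ u : Fin d → ℝ, l2 u ≤ 1 ∧
      M = Matrix.diagonal (fun i => if 0 ≤ Y.mulVec u i then (1 : ℝ) else 0) }

/-- Primal (non-convex) training objective with `m` neurons. -/
def primalObj {n d : ℕ} (Y : Matrix (Fin n) (Fin d) ℝ) (xs : Fin n → ℝ) (β : ℝ)
    (m : ℕ) (u : Fin m → Fin d → ℝ) (v : Fin m → ℝ) : ℝ :=
  (1 / 2) * l2 ((∑ j, v j • relu (Y.mulVec (u j))) - xs) ^ 2
    + (β / 2) * ∑ j, (l2 (u j) ^ 2 + |v j| ^ 2)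

/-- Optimal value of the primal training problem with `m` neurons. -/
def pStar {n d : ℕ} (Y : Matrix (Fin n) (Fin d) ℝ) (xs : Fin n → ℝ) (β : ℝ)
    (m : ℕ) : ℝ :=
  sInf { c | ∃ u : Fin m → Fin d → ℝ, ∃ v : Fin m → ℝ, c = primalObj Y xs β m u v }

/-- Dual feasibility: `(2 Dᵢ − I) Y wᵢ ≥ 0` componentwise for every `i`. -/
def dualFeasible {n d ℓ : ℕ} (Y : Matrix (Fin n) (Fin d) ℝ)
    (D : Fin ℓ → Matrix (Fin n) (Fin n) ℝ) (w : Fin ℓ → Fin d → ℝ) : Prop :=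
  ∀ i j, 0 ≤ ((2 • D i - 1).mulVec (Y.mulVec (w i))) j

/-- Convex dual objective. -/
def dualObj {n d ℓ : ℕ} (Y : Matrix (Fin n) (Fin d) ℝ) (xs : Fin n → ℝ) (β : ℝ)
    (D : Fin ℓ → Matrix (Fin n) (Fin n) ℝ) (w z : Fin ℓ → Fin d → ℝ) : ℝ :=
  (1 / 2) * l2 ((∑ i, (D i).mulVec (Y.mulVec (w i - z i))) - xs) ^ 2
    + β * ∑ i, (l2 (w i) + l2 (z i))

/-- Optimal value of the convex dual program. -/
def dStar {n d ℓ : ℕ} (Y : Matrix (Fin n) (Fin d) ℝ) (xs : Fin n → ℝ) (β : ℝ)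
    (D : Fin ℓ → Matrix (Fin n) (Fin n) ℝ) : ℝ :=
  sInf { c | ∃ w z : Fin ℓ → Fin d → ℝ,
    dualFeasible Y D w ∧ dualFeasible Y D z ∧ c = dualObj Y xs β D w z }

end

open Classical in
/-- First-layer neuron `wᵢ/√‖wᵢ‖₂` built from a dual variable (zero if `wᵢ = 0`). -/
noncomputable def neuronU {d ℓ : ℕ} (w : Fin ℓ → Fin d → ℝ) : Fin ℓ → Fin d → ℝ :=
  fun i => if w i = 0 then 0 else (Real.sqrt (l2 (w i)))⁻¹ • w i

open Classical in
/-- Second-layer weight `√‖wᵢ‖₂` built from a dual variable `wᵢ` (zero if `wᵢ = 0`). -/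
noncomputable def neuronVpos {d ℓ : ℕ} (w : Fin ℓ → Fin d → ℝ) : Fin ℓ → ℝ :=
  fun i => if w i = 0 then 0 else Real.sqrt (l2 (w i))

open Classical in
/-- Second-layer weight `−√‖zᵢ‖₂` built from a dual variable `zᵢ` (zero if `zᵢ = 0`). -/
noncomputable def neuronVneg {d ℓ : ℕ} (z : Fin ℓ → Fin d → ℝ) : Fin ℓ → ℝ :=
  fun i => if z i = 0 then 0 else -Real.sqrt (l2 (z i))

/-- Stacked first-layer weights with `2ℓ` neurons: the first `ℓ` built from `w`,
the last `ℓ` built from `z`. -/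
noncomputable def stackU {d ℓ : ℕ} (w z : Fin ℓ → Fin d → ℝ) :
    Fin (2 * ℓ) → Fin d → ℝ :=
  fun k =>
    if h : (k : ℕ) < ℓ then neuronU w ⟨k, h⟩
    else neuronU z ⟨(k : ℕ) - ℓ, by have := k.isLt; omega⟩

/-- Stacked second-layer weights with `2ℓ` neurons. -/
noncomputable def stackV {d ℓ : ℕ} (w z : Fin ℓ → Fin d → ℝ) : Fin (2 * ℓ) → ℝ :=
  fun k =>
    if h : (k : ℕ) < ℓ then neuronVpos w ⟨k, h⟩
    else neuronVneg z ⟨(k : ℕ) - ℓ, by have := k.isLt; omega⟩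

/-!
Dual feasibility of `wᵢ` says that `Y wᵢ` is nonnegative exactly where the sign pattern `Dᵢ`
is one, so `Dᵢ Y wᵢ = (Y wᵢ)₊`. Rescaling a neuron `(u, v) ↦ (u / t, t v)` with `t > 0` leaves
`(Y u)₊ v` unchanged, and `t = √‖wᵢ‖₂` balances the weight decay: `‖u‖₂² + v² = 2 ‖wᵢ‖₂`.
Hence the `2ℓ` neurons built from `w` and `z` reproduce both terms of the dual objective, and
padding with zero neurons gives `p*_m ≤ d*` for every `m ≥ 2ℓ`.
-/

lemma l2_eq_norm {k : ℕ} (x : Fin k → ℝ) : l2 x = ‖WithLp.toLp 2 x‖ := by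
  simp [l2, EuclideanSpace.norm_eq]

lemma l2_smul {k : ℕ} (c : ℝ) (x : Fin k → ℝ) : l2 (c • x) = |c| * l2 x := by
  simp only [l2_eq_norm, WithLp.toLp_smul, norm_smul, Real.norm_eq_abs]

lemma l2_pos_of_ne_zero {k : ℕ} {x : Fin k → ℝ} (hx : x ≠ 0) : 0 < l2 x := by
  simpa [l2_eq_norm] using hx

lemma relu_smul_of_nonneg {k : ℕ} {c : ℝ} (hc : 0 ≤ c) (x : Fin k → ℝ) :
    relu (c • x) = c • relu x := by
  ext j
  simp [relu, mul_max_of_nonneg _ _ hc]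

lemma mulVec_eq_relu_of_mem_signPatterns {n d : ℕ} {Y : Matrix (Fin n) (Fin d) ℝ}
    {M : Matrix (Fin n) (Fin n) ℝ} (hM : M ∈ signPatterns Y) {x : Fin n → ℝ}
    (hx : ∀ j, 0 ≤ ((2 • M - 1) *ᵥ x) j) : M *ᵥ x = relu x := by
  obtain ⟨u, -, rfl⟩ := hM
  ext j
  have hxj := hx j
  simp only [two_smul, sub_mulVec, add_mulVec, one_mulVec, mulVec_diagonal, Pi.sub_apply,
    Pi.add_apply] at hxj
  simp only [mulVec_diagonal, relu]
  split_ifs at hxj ⊢ <;> simp only [one_mul, zero_mul] at hxj ⊢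
  · rw [max_eq_left (by linarith)]
  · rw [max_eq_right (by linarith)]

lemma neuronVneg_eq_neg {d ℓ : ℕ} (z : Fin ℓ → Fin d → ℝ) : neuronVneg z = -neuronVpos z := by
  ext i
  simp only [neuronVneg, neuronVpos, Pi.neg_apply]
  split_ifs <;> simp

lemma neuronVpos_smul_relu {n d ℓ : ℕ} (Y : Matrix (Fin n) (Fin d) ℝ)
    (w : Fin ℓ → Fin d → ℝ) (i : Fin ℓ) :
    neuronVpos w i • relu (Y *ᵥ neuronU w i) = relu (Y *ᵥ w i) := by
  by_cases h : w i = 0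
  · ext j
    simp [neuronVpos, neuronU, h, relu]
  · have hs : 0 < √(l2 (w i)) := Real.sqrt_pos.2 (l2_pos_of_ne_zero h)
    rw [neuronVpos, neuronU, if_neg h, if_neg h, mulVec_smul,
      relu_smul_of_nonneg (inv_nonneg.2 hs.le), smul_smul, mul_inv_cancel₀ hs.ne', one_smul]

lemma l2_neuronU_sq_add_neuronVpos_sq {d ℓ : ℕ} (w : Fin ℓ → Fin d → ℝ) (i : Fin ℓ) :
    l2 (neuronU w i) ^ 2 + neuronVpos w i ^ 2 = 2 * l2 (w i) := by
  by_cases h : w i = 0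
  · simp [neuronU, neuronVpos, h, l2]
  · have hl : 0 < l2 (w i) := l2_pos_of_ne_zero h
    have hs : 0 < √(l2 (w i)) := Real.sqrt_pos.2 hl
    rw [neuronVpos, neuronU, if_neg h, if_neg h, l2_smul, abs_of_pos (inv_pos.2 hs), mul_pow,
      inv_pow, Real.sq_sqrt hl.le]
    field_simp
    ring

lemma sum_stackU_stackV {M : Type*} [AddCommMonoid M] {d ℓ : ℕ} (w z : Fin ℓ → Fin d → ℝ)
    (F : (Fin d → ℝ) → ℝ → M) :
    ∑ k, F (stackU w z k) (stackV w z k) =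
      ∑ i, (F (neuronU w i) (neuronVpos w i) + F (neuronU z i) (neuronVneg z i)) := by
  rw [← Fin.sum_congr' _ (two_mul ℓ).symm, Fin.sum_univ_add, ← sum_add_distrib]
  simp [stackU, stackV]

theorem primalObj_stack_eq_dualObj {n d ℓ : ℕ} (Y : Matrix (Fin n) (Fin d) ℝ)
    (xs : Fin n → ℝ) (β : ℝ) {D : Fin ℓ → Matrix (Fin n) (Fin n) ℝ}
    (hD : ∀ i, D i ∈ signPatterns Y) {w z : Fin ℓ → Fin d → ℝ}
    (hw : dualFeasible Y D w) (hz : dualFeasible Y D z) :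
    primalObj Y xs β (2 * ℓ) (stackU w z) (stackV w z) = dualObj Y xs β D w z := by
  have hfit : ∑ k, stackV w z k • relu (Y *ᵥ stackU w z k) =
      ∑ i, D i *ᵥ (Y *ᵥ (w i - z i)) := by
    rw [sum_stackU_stackV w z fun u v => v • relu (Y *ᵥ u)]
    refine sum_congr rfl fun i _ => ?_
    rw [neuronVneg_eq_neg, Pi.neg_apply, neg_smul, neuronVpos_smul_relu, neuronVpos_smul_relu,
      mulVec_sub, mulVec_sub, mulVec_eq_relu_of_mem_signPatterns (hD i) (hw i),
      mulVec_eq_relu_of_mem_signPatterns (hD i) (hz i), sub_eq_add_neg]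
  have hreg : ∑ k, (l2 (stackU w z k) ^ 2 + |stackV w z k| ^ 2) =
      2 * ∑ i, (l2 (w i) + l2 (z i)) := by
    rw [sum_stackU_stackV w z fun u v => l2 u ^ 2 + |v| ^ 2, mul_sum]
    refine sum_congr rfl fun i _ => ?_
    simp only [sq_abs, neuronVneg_eq_neg, Pi.neg_apply, neg_sq,
      l2_neuronU_sq_add_neuronVpos_sq]
    ring
  rw [primalObj, dualObj, hfit, hreg]
  ring

lemma primalObj_nonneg {n d : ℕ} (Y : Matrix (Fin n) (Fin d) ℝ) (xs : Fin n → ℝ) {β : ℝ}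
    (hβ : 0 ≤ β) (m : ℕ) (u : Fin m → Fin d → ℝ) (v : Fin m → ℝ) :
    0 ≤ primalObj Y xs β m u v := by
  unfold primalObj
  positivity

lemma sum_extend_zero {ι κ α β M : Type*} [Fintype ι] [Fintype κ] [Zero α] [Zero β]
    [AddCommMonoid M] {e : ι → κ} (he : e.Injective) (f : ι → α) (g : ι → β)
    (F : α → β → M) (hF : F 0 0 = 0) :
    ∑ j, F (Function.extend e f 0 j) (Function.extend e g 0 j) = ∑ i, F (f i) (g i) :=
  (Fintype.sum_of_injective e he _ _
    (fun j hj => by simp [Function.extend_apply' _ _ _ hj, hF])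
    (fun i => by simp [he.extend_apply])).symm

lemma pStar_le_primalObj {n d k m : ℕ} (Y : Matrix (Fin n) (Fin d) ℝ) (xs : Fin n → ℝ)
    {β : ℝ} (hβ : 0 ≤ β) (hkm : k ≤ m) (u : Fin k → Fin d → ℝ) (v : Fin k → ℝ) :
    pStar Y xs β m ≤ primalObj Y xs β k u v := by
  have he := Fin.castLE_injective hkm
  have hpad : primalObj Y xs β m (Function.extend (Fin.castLE hkm) u 0)
      (Function.extend (Fin.castLE hkm) v 0) = primalObj Y xs β k u v := by
    rw [primalObj, primalObj, sum_extend_zero he u v (fun a b => b • relu (Y *ᵥ a)) (by simp),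
      sum_extend_zero he u v (fun a b => l2 a ^ 2 + |b| ^ 2) (by simp [l2])]
  rw [← hpad]
  exact csInf_le ⟨0, by rintro _ ⟨u, v, rfl⟩; exact primalObj_nonneg Y xs hβ m u v⟩ ⟨_, _, rfl⟩

theorem dual_feasible_gives_primal_weights_general {n d ℓ : ℕ}
    (Y : Matrix (Fin n) (Fin d) ℝ) (xs : Fin n → ℝ) (β : ℝ) (hβ : 0 < β)
    (D : Fin ℓ → Matrix (Fin n) (Fin n) ℝ)
    (hrange : Set.range D = signPatterns Y)
    (w z : Fin ℓ → Fin d → ℝ)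
    (hw : dualFeasible Y D w) (hz : dualFeasible Y D z) :
    primalObj Y xs β (2 * ℓ) (stackU w z) (stackV w z) = dualObj Y xs β D w z ∧
    ∀ m, 2 * ℓ ≤ m → pStar Y xs β m ≤ dStar Y xs β D := by
  have hD : ∀ i, D i ∈ signPatterns Y := fun i => hrange ▸ Set.mem_range_self i
  refine ⟨primalObj_stack_eq_dualObj Y xs β hD hw hz, fun m hm => ?_⟩
  refine le_csInf ⟨_, w, z, hw, hz, rfl⟩ ?_
  rintro _ ⟨w', z', hw', hz', rfl⟩
  rw [← primalObj_stack_eq_dualObj Y xs β hD hw' hz']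
  exact pStar_le_primalObj Y xs hβ.le hm _ _

/-- **Weak duality via reconstruction.** Any dual-feasible point
`(w, z)` yields primal weights with `m = 2ℓ` neurons attaining primal objective
value equal to the dual objective value; consequently `p*_m ≤ d*` for all `m ≥ 2ℓ`. -/
theorem dual_feasible_gives_primal_weights {n d ℓ : ℕ}
    (Y : Matrix (Fin n) (Fin d) ℝ) (xs : Fin n → ℝ) (β : ℝ) (hβ : 0 < β)
    (D : Fin ℓ → Matrix (Fin n) (Fin n) ℝ)
    (hinj : Function.Injective D) (hrange : Set.range D = signPatterns Y)
    (w z : Fin ℓ → Fin d → ℝ)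
    (hw : dualFeasible Y D w) (hz : dualFeasible Y D z) :
    primalObj Y xs β (2 * ℓ) (stackU w z) (stackV w z) = dualObj Y xs β D w z ∧
    ∀ m, 2 * ℓ ≤ m → pStar Y xs β m ≤ dStar Y xs β D :=
  dual_feasible_gives_primal_weights_general Y xs β hβ D hrange w z hw hz
end

section
/- Let Y ∈ ℝ^{n×d}, x* ∈ ℝ^n, β > 0, and let D_1, …, D_ℓ be the ReLU sign-pattern matrices of Y. Then the convex dual program attains its optimal value d*, and there exists an optimal solution (w_i*, z_i*)_{i=1}^ℓ in which the number of indices i with w_i* ≠ 0 or z_i* ≠ 0 is at most n + 1. -/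
open Matrix Finset

/-! Since `β > 0` the dual objective is coercive, so it attains its infimum on the closed
feasible set. At a minimiser, both the fitted vector `∑ Dᵢ Y (wᵢ - zᵢ)` and the penalty
`∑ (‖wᵢ‖ + ‖zᵢ‖)` are read off the sum of the `2ℓ` vectors `(±Dᵢ Y vᵢ, ‖vᵢ‖) ∈ ℝⁿ × ℝ`.
By Carathéodory's theorem for cones this sum is a nonnegative combination of at most `n + 1`
of these vectors; rescaling the blocks `wᵢ`, `zᵢ` by the coefficients preserves the cone
constraints and the objective, and leaves at most `n + 1` nonzero blocks. -/

open Filter Module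

section Caratheodory

variable {𝕜 E ι : Type*} [Field 𝕜] [LinearOrder 𝕜] [IsStrictOrderedRing 𝕜]
  [AddCommGroup E] [Module 𝕜 E] [Fintype ι]

/-- The witness is `c - t • g`, with `t` the largest step keeping every coefficient
nonnegative. -/
theorem exists_nonneg_sum_smul_eq_card_lt_of_relation (v : ι → E) {c g : ι → 𝕜} (hc : 0 ≤ c)
    (hg : ∑ i, g i • v i = 0) (hgc : ∀ i, c i = 0 → g i = 0) (hpos : ∃ i, 0 < g i) :
    ∃ c' : ι → 𝕜, 0 ≤ c' ∧ ∑ i, c' i • v i = ∑ i, c i • v i ∧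
      #{i | c' i ≠ 0} < #{i | c i ≠ 0} := by
  obtain ⟨i₁, hi₁, hmin⟩ :=
    Finset.exists_min_image {i | 0 < g i} (fun i => c i / g i)
      (by obtain ⟨i, hi⟩ := hpos; exact ⟨i, by simpa using hi⟩)
  rw [Finset.mem_filter_univ] at hi₁
  set t := c i₁ / g i₁
  have ht : 0 ≤ t := div_nonneg (hc i₁) hi₁.le
  refine ⟨c - t • g, fun i => ?_, ?_, ?_⟩
  · show 0 ≤ c i - t * g i
    rcases le_or_gt (g i) 0 with hgi | hgi
    · have hci : 0 ≤ c i := hc i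
      linarith [mul_nonpos_of_nonneg_of_nonpos ht hgi]
    · have := (le_div_iff₀ hgi).mp (hmin i (by simpa using hgi))
      linarith
  · simp [sub_smul, Finset.sum_sub_distrib, mul_smul, ← Finset.smul_sum, hg]
  · refine Finset.card_lt_card ((Finset.ssubset_iff_of_subset ?_).mpr ⟨i₁, ?_, ?_⟩)
    · intro i
      simp only [Finset.mem_filter_univ, Pi.sub_apply, Pi.smul_apply, smul_eq_mul]
      contrapose!
      intro h
      simp [h, hgc i h]
    · simpa using fun h => hi₁.ne' (hgc i₁ h)
    · simp [t, hi₁.ne']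

variable [FiniteDimensional 𝕜 E]

/-- Carathéodory's theorem for cones. -/
theorem exists_nonneg_sum_smul_eq_card_le_finrank (v : ι → E) {c : ι → 𝕜} (hc : 0 ≤ c) :
    ∃ c' : ι → 𝕜, 0 ≤ c' ∧ ∑ i, c' i • v i = ∑ i, c i • v i ∧
      #{i | c' i ≠ 0} ≤ finrank 𝕜 E := by
  induction hN : #{i | c i ≠ 0} using Nat.strong_induction_on generalizing c with
  | _ N ih =>
    by_cases hle : N ≤ finrank 𝕜 E
    · exact ⟨c, hc, rfl, hN ▸ hle⟩
    have hdep : ¬ LinearIndepOn 𝕜 v ({i | c i ≠ 0} : Finset ι) := fun hli =>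
      hle (hN ▸ by simpa using hli.fintype_card_le_finrank)
    obtain ⟨f, hf, i, hi, hfi⟩ := not_linearIndepOn_finset_iff.mp hdep
    rw [Finset.mem_filter_univ] at hi
    set g : ι → 𝕜 := fun i => if c i ≠ 0 then f i else 0
    have hg : ∑ i, g i • v i = 0 := by simpa [g, ite_smul, Finset.sum_filter] using hf
    have hgc : ∀ i, c i = 0 → g i = 0 := fun i h => by simp [g, h]
    have hgi : g i ≠ 0 := by simp [g, hi, hfi]
    obtain ⟨c₁, hc₁, hsum₁, hlt⟩ : ∃ c₁ : ι → 𝕜, 0 ≤ c₁ ∧ ∑ i, c₁ i • v i = ∑ i, c i • v i ∧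
        #{i | c₁ i ≠ 0} < #{i | c i ≠ 0} := by
      rcases hgi.lt_or_gt with hneg | hpos
      · exact exists_nonneg_sum_smul_eq_card_lt_of_relation v hc (g := -g)
          (by simp [neg_smul, hg]) (by simpa using hgc) ⟨i, by simpa using hneg⟩
      · exact exists_nonneg_sum_smul_eq_card_lt_of_relation v hc hg hgc ⟨i, hpos⟩
    obtain ⟨c', hc', hsum', hcard⟩ := ih _ (hN ▸ hlt) hc₁ rfl
    exact ⟨c', hc', hsum'.trans hsum₁, hcard⟩

end Caratheodory

section l2

variable {k : ℕ}

theorem l2_eq_norm_toLp (x : Fin k → ℝ) :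
    l2 x = ‖(WithLp.toLp 2 x : EuclideanSpace ℝ (Fin k))‖ := by
  rw [EuclideanSpace.norm_eq]
  simp only [l2, Real.norm_eq_abs, sq_abs]

theorem l2_nonneg (x : Fin k → ℝ) : 0 ≤ l2 x := Real.sqrt_nonneg _

@[fun_prop]
theorem continuous_l2 : Continuous (l2 : (Fin k → ℝ) → ℝ) :=
  (continuous_norm.comp (PiLp.continuous_toLp 2 _)).congr fun x => (l2_eq_norm_toLp x).symm

theorem l2_smul_of_nonneg {c : ℝ} (hc : 0 ≤ c) (x : Fin k → ℝ) : l2 (c • x) = c * l2 x := by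
  simp [l2_eq_norm_toLp, norm_smul, abs_of_nonneg hc]

theorem norm_le_l2 (x : Fin k → ℝ) : ‖x‖ ≤ l2 x := by
  refine (pi_norm_le_iff_of_nonneg (l2_nonneg x)).mpr fun i => ?_
  rw [l2_eq_norm_toLp]
  exact PiLp.norm_apply_le (WithLp.toLp 2 x : EuclideanSpace ℝ (Fin k)) i

end l2

section DualProgram

variable {n d ℓ : ℕ} (Y : Matrix (Fin n) (Fin d) ℝ) (xs : Fin n → ℝ) (β : ℝ)
  (D : Fin ℓ → Matrix (Fin n) (Fin n) ℝ)

theorem dualFeasible_zero : dualFeasible Y D 0 := fun i j => by simp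

theorem dualFeasible.smul {w : Fin ℓ → Fin d → ℝ} (hw : dualFeasible Y D w) {c : Fin ℓ → ℝ}
    (hc : 0 ≤ c) : dualFeasible Y D fun i => c i • w i := fun i j => by
  simpa only [mulVec_smul, Pi.smul_apply, smul_eq_mul] using mul_nonneg (hc i) (hw i j)

theorem isClosed_setOf_dualFeasible : IsClosed {w : Fin ℓ → Fin d → ℝ | dualFeasible Y D w} := by
  simp only [dualFeasible, Set.ofPred_forall]
  exact isClosed_iInter fun i => isClosed_iInter fun j =>
    isClosed_le continuous_const (by fun_prop)

noncomputable def dualAtom (w z : Fin ℓ → Fin d → ℝ) : Fin ℓ ⊕ Fin ℓ → (Fin n → ℝ) × ℝ :=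
  Sum.elim (fun i => (D i *ᵥ (Y *ᵥ w i), l2 (w i))) (fun i => (-(D i *ᵥ (Y *ᵥ z i)), l2 (z i)))

theorem dualObj_eq_sum_dualAtom (w z : Fin ℓ → Fin d → ℝ) :
    dualObj Y xs β D w z = 1 / 2 * l2 ((∑ j, dualAtom Y D w z j).1 - xs) ^ 2
      + β * (∑ j, dualAtom Y D w z j).2 := by
  simp only [dualObj, dualAtom, Fintype.sum_sum_type, Prod.fst_add, Prod.snd_add, Prod.fst_sum,
    Prod.snd_sum, Sum.elim_inl, Sum.elim_inr, mulVec_sub, Finset.sum_sub_distrib,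
    Finset.sum_neg_distrib, ← sub_eq_add_neg, Finset.sum_add_distrib]

theorem dualAtom_smul {c : Fin ℓ ⊕ Fin ℓ → ℝ} (hc : 0 ≤ c) (w z : Fin ℓ → Fin d → ℝ) :
    dualAtom Y D (fun i => c (.inl i) • w i) (fun i => c (.inr i) • z i)
      = fun j => c j • dualAtom Y D w z j := by
  funext j
  rcases j with i | i <;>
    simp [dualAtom, mulVec_smul, l2_smul_of_nonneg (hc _)]

theorem exists_dualFeasible_dualObj_eq_ncard_le (w z : Fin ℓ → Fin d → ℝ)
    (hw : dualFeasible Y D w) (hz : dualFeasible Y D z) :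
    ∃ w' z' : Fin ℓ → Fin d → ℝ, dualFeasible Y D w' ∧ dualFeasible Y D z' ∧
      dualObj Y xs β D w' z' = dualObj Y xs β D w z ∧
      {i : Fin ℓ | w' i ≠ 0 ∨ z' i ≠ 0}.ncard ≤ n + 1 := by
  obtain ⟨c, hc, hsum, hcard⟩ :=
    exists_nonneg_sum_smul_eq_card_le_finrank (dualAtom Y D w z) (c := (1 : Fin ℓ ⊕ Fin ℓ → ℝ))
      zero_le_one
  refine ⟨fun i => c (.inl i) • w i, fun i => c (.inr i) • z i,
    hw.smul Y D fun i => hc _, hz.smul Y D fun i => hc _, ?_, ?_⟩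
  · simp only [dualObj_eq_sum_dualAtom, dualAtom_smul Y D hc, hsum, Pi.one_apply, one_smul]
  · have hsub : {i : Fin ℓ | c (.inl i) • w i ≠ 0 ∨ c (.inr i) • z i ≠ 0} ⊆
        ({j | c j ≠ 0} : Finset _).image (Sum.elim id id) := by
      rintro i (h | h)
      · exact Finset.mem_image.mpr ⟨.inl i, by simpa using left_ne_zero_of_smul h, rfl⟩
      · exact Finset.mem_image.mpr ⟨.inr i, by simpa using left_ne_zero_of_smul h, rfl⟩
    calc _ ≤ (({j | c j ≠ 0} : Finset _).image (Sum.elim id id) : Set (Fin ℓ)).ncard :=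
          Set.ncard_le_ncard hsub (Finset.finite_toSet _)
      _ ≤ #{j | c j ≠ 0} := by rw [Set.ncard_coe_finset]; exact Finset.card_image_le
      _ ≤ n + 1 := by simpa using hcard

theorem continuous_dualObj :
    Continuous fun p : (Fin ℓ → Fin d → ℝ) × (Fin ℓ → Fin d → ℝ) => dualObj Y xs β D p.1 p.2 := by
  unfold dualObj
  fun_prop

theorem norm_le_sum_l2 (p : (Fin ℓ → Fin d → ℝ) × (Fin ℓ → Fin d → ℝ)) :
    ‖p‖ ≤ ∑ i, (l2 (p.1 i) + l2 (p.2 i)) := by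
  have hnonneg : ∀ i, 0 ≤ l2 (p.1 i) + l2 (p.2 i) := fun i =>
    add_nonneg (l2_nonneg _) (l2_nonneg _)
  have hS := Finset.sum_nonneg fun i (_ : i ∈ Finset.univ) => hnonneg i
  have hle : ∀ i, l2 (p.1 i) + l2 (p.2 i) ≤ ∑ i, (l2 (p.1 i) + l2 (p.2 i)) := fun i =>
    Finset.single_le_sum (fun i _ => hnonneg i) (Finset.mem_univ i)
  rw [Prod.norm_def]
  refine max_le ((pi_norm_le_iff_of_nonneg hS).mpr fun i => ?_)
    ((pi_norm_le_iff_of_nonneg hS).mpr fun i => ?_)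
  · linarith [norm_le_l2 (p.1 i), l2_nonneg (p.2 i), hle i]
  · linarith [norm_le_l2 (p.2 i), l2_nonneg (p.1 i), hle i]

theorem tendsto_dualObj_cocompact (hβ : 0 < β) :
    Tendsto (fun p : (Fin ℓ → Fin d → ℝ) × (Fin ℓ → Fin d → ℝ) => dualObj Y xs β D p.1 p.2)
      (cocompact _) atTop := by
  refine tendsto_atTop_mono (fun p => ?_) ((tendsto_norm_cocompact_atTop).const_mul_atTop hβ)
  calc β * ‖p‖ ≤ β * ∑ i, (l2 (p.1 i) + l2 (p.2 i)) :=
        mul_le_mul_of_nonneg_left (norm_le_sum_l2 p) hβ.le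
    _ ≤ dualObj Y xs β D p.1 p.2 := le_add_of_nonneg_left (by positivity)

theorem exists_isMinOn_dualObj (hβ : 0 < β) :
    ∃ p ∈ {p : (Fin ℓ → Fin d → ℝ) × (Fin ℓ → Fin d → ℝ) |
        dualFeasible Y D p.1 ∧ dualFeasible Y D p.2},
      IsMinOn (fun p => dualObj Y xs β D p.1 p.2)
        {p | dualFeasible Y D p.1 ∧ dualFeasible Y D p.2} p :=
  (continuous_dualObj Y xs β D).continuousOn.exists_isMinOn'
    (((isClosed_setOf_dualFeasible Y D).preimage continuous_fst).inter
      ((isClosed_setOf_dualFeasible Y D).preimage continuous_snd))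
    (x₀ := (0, 0)) ⟨dualFeasible_zero Y D, dualFeasible_zero Y D⟩
    (((tendsto_dualObj_cocompact Y xs β D hβ).eventually_ge_atTop _).filter_mono inf_le_left)

end DualProgram

theorem dual_optimum_sparse_general {n d ℓ : ℕ} (Y : Matrix (Fin n) (Fin d) ℝ)
    (xs : Fin n → ℝ) (β : ℝ) (hβ : 0 < β)
    (D : Fin ℓ → Matrix (Fin n) (Fin n) ℝ) :
    ∃ w z : Fin ℓ → Fin d → ℝ,
      dualFeasible Y D w ∧ dualFeasible Y D z ∧
      dualObj Y xs β D w z = dStar Y xs β D ∧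
      ({ i : Fin ℓ | w i ≠ 0 ∨ z i ≠ 0 }.ncard ≤ n + 1) := by
  obtain ⟨⟨w₀, z₀⟩, ⟨hw₀, hz₀⟩, hmin⟩ := exists_isMinOn_dualObj Y xs β D hβ
  obtain ⟨w, z, hw, hz, hobj, hcard⟩ :=
    exists_dualFeasible_dualObj_eq_ncard_le Y xs β D w₀ z₀ hw₀ hz₀
  refine ⟨w, z, hw, hz, ?_, hcard⟩
  rw [hobj, dStar]
  refine Eq.symm <| IsLeast.csInf_eq ⟨⟨w₀, z₀, hw₀, hz₀, rfl⟩, ?_⟩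
  rintro _ ⟨w', z', hw', hz', rfl⟩
  exact isMinOn_iff.mp hmin (w', z') ⟨hw', hz'⟩

/-- **Attainment and sparsity of the dual optimum.** The convex
dual program attains its optimal value `d*`, and there is an optimal solution
`(wᵢ*, zᵢ*)` in which the number of indices `i` with `wᵢ* ≠ 0` or `zᵢ* ≠ 0` is
at most `n + 1`. -/
theorem dual_optimum_sparse {n d ℓ : ℕ} (Y : Matrix (Fin n) (Fin d) ℝ)
    (xs : Fin n → ℝ) (β : ℝ) (hβ : 0 < β)
    (D : Fin ℓ → Matrix (Fin n) (Fin n) ℝ)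
    (hinj : Function.Injective D) (hrange : Set.range D = signPatterns Y) :
    ∃ w z : Fin ℓ → Fin d → ℝ,
      dualFeasible Y D w ∧ dualFeasible Y D z ∧
      dualObj Y xs β D w z = dStar Y xs β D ∧
      ({ i : Fin ℓ | w i ≠ 0 ∨ z i ≠ 0 }.ncard ≤ n + 1) :=
  dual_optimum_sparse_general Y xs β hβ D
end
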